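/- arXiv:1006.1987 — 6 statements merged into one kernel-verified Lean document; each statement's English description precedes it below -/
import Mathlib

section
/- Let H be a complex Hilbert space and T a bounded linear operator on H. Then T is similar to an isometry (i.e., there exist a bounded invertible operator S on H and a linear isometry U : H → H with T = S⁻¹ ∘ U ∘ S) if and only if there exists a constant k > 0 such that for every x ∈ H and every n ∈ ℕ, (1/k)‖x‖ ≤ ‖Tⁿx‖ ≤ k‖x‖. -/
/-!
If `T = S⁻¹ U S` with `U` isometric, then `‖S (Tⁿ x)‖ = ‖S x‖`, which pins `‖Tⁿ x‖` between two
multiples of `‖x‖`. Conversely, given such bounds, average the Gram operators `(Tⁱ)† Tⁱ` over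
`i ≤ N` and take a weak-operator limit `A` of these averages along an ultrafilter finer than
`atTop`. Then `re ⟪A x, x⟫` is a Banach limit of `‖Tⁱ x‖²`: it is bounded below by `‖x‖² / k²`
and does not change when `x` is replaced by `T x`. So `A` is positive and invertible, and
`S = √A` satisfies `‖S (T x)‖ = ‖S x‖`, i.e. `S T S⁻¹` is an isometry.
-/

open Filter Topology
open scoped InnerProductSpace

section Similarity

variable {𝕜 E F : Type*} [NontriviallyNormedField 𝕜] [NormedAddCommGroup E] [NormedSpace 𝕜 E]
  [NormedAddCommGroup F] [NormedSpace 𝕜 F]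

theorem ContinuousLinearEquiv.norm_le_of_norm_apply_eq (S : E ≃L[𝕜] F) {x y : E}
    (h : ‖S x‖ = ‖S y‖) :
    ‖x‖ ≤ ‖(S.symm : F →L[𝕜] E)‖ * ‖(S : E →L[𝕜] F)‖ * ‖y‖ :=
  calc ‖x‖ = ‖S.symm (S x)‖ := by rw [S.symm_apply_apply]
    _ ≤ ‖(S.symm : F →L[𝕜] E)‖ * ‖S y‖ := h ▸ (S.symm : F →L[𝕜] E).le_opNorm (S x)
    _ ≤ ‖(S.symm : F →L[𝕜] E)‖ * ‖(S : E →L[𝕜] F)‖ * ‖y‖ := by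
      rw [mul_assoc]; gcongr; exact (S : E →L[𝕜] F).le_opNorm y

theorem exists_linearIsometry_conj_iff (T : E →L[𝕜] E) :
    (∃ (S : E ≃L[𝕜] F) (U : F →ₗᵢ[𝕜] F), ∀ x, T x = S.symm (U (S x))) ↔
      ∃ S : E ≃L[𝕜] F, ∀ x, ‖S (T x)‖ = ‖S x‖ := by
  constructor
  · rintro ⟨S, U, hT⟩
    exact ⟨S, fun x ↦ by rw [hT, S.apply_symm_apply, U.norm_map]⟩
  · rintro ⟨S, hS⟩
    refine ⟨S, ⟨((S : E →L[𝕜] F) ∘L T ∘L (S.symm : F →L[𝕜] E) : F →ₗ[𝕜] F), fun y ↦ ?_⟩,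
      fun x ↦ ?_⟩
    · simpa using hS (S.symm y)
    · simp

theorem exists_norm_pow_apply_bounds_of_norm_apply_eq (S : E ≃L[𝕜] F) {T : E →L[𝕜] E}
    (h : ∀ x, ‖S (T x)‖ = ‖S x‖) :
    ∃ k : ℝ, 0 < k ∧ ∀ (x : E) (n : ℕ), 1 / k * ‖x‖ ≤ ‖(T ^ n) x‖ ∧ ‖(T ^ n) x‖ ≤ k * ‖x‖ := by
  set k := ‖(S.symm : F →L[𝕜] E)‖ * ‖(S : E →L[𝕜] F)‖ + 1
  have hk : 0 < k := by positivity
  refine ⟨k, hk, fun x n ↦ ?_⟩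
  have hn : ‖S ((T ^ n) x)‖ = ‖S x‖ := by
    induction n with
    | zero => simp
    | succ n ih => rw [pow_succ', mul_apply_eq_comp, h, ih]
  constructor
  · rw [one_div, inv_mul_le_iff₀ hk]
    exact (S.norm_le_of_norm_apply_eq hn.symm).trans (by gcongr; linarith)
  · exact (S.norm_le_of_norm_apply_eq hn).trans (by gcongr; linarith)

end Similarity

noncomputable def cesaroMean (u : ℕ → ℝ) (N : ℕ) : ℝ :=
  ((N + 1 : ℕ) : ℝ)⁻¹ * ∑ i ∈ Finset.range (N + 1), u i

theorem le_cesaroMean {u : ℕ → ℝ} {a : ℝ} (h : ∀ i, a ≤ u i) (N : ℕ) : a ≤ cesaroMean u N := by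
  rw [cesaroMean, le_inv_mul_iff₀ (by positivity)]
  simpa using Finset.card_nsmul_le_sum (Finset.range (N + 1)) u a fun i _ ↦ h i

theorem tendsto_cesaroMean_succ_sub {u : ℕ → ℝ} {M : ℝ} (hu : ∀ i, |u i| ≤ M) :
    Tendsto (fun N ↦ cesaroMean (fun i ↦ u (i + 1)) N - cesaroMean u N) atTop (𝓝 0) := by
  have h (N : ℕ) : cesaroMean (fun i ↦ u (i + 1)) N - cesaroMean u N =
      1 / ((N : ℝ) + 1) * (u (N + 1) - u 0) := by
    rw [cesaroMean, cesaroMean, ← mul_sub, ← Finset.sum_sub_distrib, Finset.sum_range_sub]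
    push_cast
    ring
  simp only [h]
  refine tendsto_one_div_add_atTop_nhds_zero_nat.zero_mul_isBoundedUnder_le ⟨2 * M, ?_⟩
  refine eventually_map.2 (Eventually.of_forall fun N ↦ ?_)
  simpa [two_mul] using (abs_sub _ _).trans (add_le_add (hu (N + 1)) (hu 0))

section WeakOperatorLimit

variable {ι 𝕜 E : Type*} [RCLike 𝕜] [NormedAddCommGroup E] [InnerProductSpace 𝕜 E]
  [CompleteSpace E]

theorem exists_tendsto_inner_apply_of_norm_le (f : ι → E →L[𝕜] E) (φ : Ultrafilter ι)
    {C : ℝ} (hf : ∀ i, ‖f i‖ ≤ C) :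
    ∃ A : E →L[𝕜] E, ∀ x y, Tendsto (fun i ↦ ⟪f i x, y⟫_𝕜) φ (𝓝 ⟪A x, y⟫_𝕜) := by
  have hbound : ∀ i x y, ‖⟪f i x, y⟫_𝕜‖ ≤ C * ‖x‖ * ‖y‖ := fun i x y ↦
    (norm_inner_le_norm _ _).trans <| by gcongr; exact (f i).le_of_opNorm_le (hf i) x
  have hlim : ∀ x y, ∃ L, Tendsto (fun i ↦ ⟪f i x, y⟫_𝕜) φ (𝓝 L) := fun x y ↦
    have ⟨L, _, hL⟩ := (isCompact_closedBall (0 : 𝕜) (C * ‖x‖ * ‖y‖)).ultrafilter_le_nhds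
      (φ.map fun i ↦ ⟪f i x, y⟫_𝕜)
      (by
        rw [Ultrafilter.coe_map, le_principal_iff]
        exact mem_map.2 <| univ_mem' fun i ↦ mem_closedBall_zero_iff.2 (hbound i x y))
    ⟨L, hL⟩
  choose p hp using hlim
  have hp_unique {x y L} (h : Tendsto (fun i ↦ ⟪f i x, y⟫_𝕜) φ (𝓝 L)) : p x y = L :=
    tendsto_nhds_unique (hp x y) h
  let B : E →L⋆[𝕜] E →L[𝕜] 𝕜 := LinearMap.mkContinuous₂
    (LinearMap.mk₂'ₛₗ (starRingEnd 𝕜) (RingHom.id 𝕜) p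
      (fun x x' y ↦ hp_unique <| by simpa [inner_add_left] using (hp x y).add (hp x' y))
      (fun c x y ↦ hp_unique <| by simpa [inner_smul_left] using (hp x y).const_mul _)
      (fun x y y' ↦ hp_unique <| by simpa [inner_add_right] using (hp x y).add (hp x y'))
      (fun c x y ↦ hp_unique <| by simpa [inner_smul_right] using (hp x y).const_mul _))
    C fun x y ↦ le_of_tendsto (hp x y).norm (Eventually.of_forall (hbound · x y))
  exact ⟨InnerProductSpace.continuousLinearMapOfBilin B, fun x y ↦ by
    simpa [InnerProductSpace.continuousLinearMapOfBilin_apply, B] using hp x y⟩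

theorem isSelfAdjoint_of_tendsto_inner_apply {f : ι → E →L[𝕜] E} {l : Filter ι} [l.NeBot]
    {A : E →L[𝕜] E} (hf : ∀ i, IsSelfAdjoint (f i))
    (hA : ∀ x y, Tendsto (fun i ↦ ⟪f i x, y⟫_𝕜) l (𝓝 ⟪A x, y⟫_𝕜)) : IsSelfAdjoint A := by
  refine LinearMap.IsSymmetric.isSelfAdjoint fun x y ↦ tendsto_nhds_unique (hA x y) ?_
  convert (hA y x).star using 2 with i
  · simpa using (hf i).isSymmetric x y
  · simp

end WeakOperatorLimit

section CesaroGram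

variable {𝕜 E : Type*} [RCLike 𝕜] [NormedAddCommGroup E] [InnerProductSpace 𝕜 E]
  [CompleteSpace E]

open ContinuousLinearMap in
noncomputable def cesaroGram (T : E →L[𝕜] E) (N : ℕ) : E →L[𝕜] E :=
  ((N + 1 : ℕ) : 𝕜)⁻¹ • ∑ i ∈ Finset.range (N + 1), adjoint (T ^ i) ∘L T ^ i

variable (T : E →L[𝕜] E) (N : ℕ)

theorem isSelfAdjoint_cesaroGram : IsSelfAdjoint (cesaroGram T N) := by
  refine (IsSelfAdjoint.natCast _).inv₀.smul (isSelfAdjoint_sum _ fun i _ ↦ ?_)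
  rw [← ContinuousLinearMap.star_eq_adjoint]
  exact .star_mul_self _

theorem norm_cesaroGram_le {C : ℝ} (hT : ∀ n, ‖T ^ n‖ ≤ C) : ‖cesaroGram T N‖ ≤ C ^ 2 := by
  have hC : 0 ≤ C := (norm_nonneg _).trans (hT 0)
  calc ‖cesaroGram T N‖
      ≤ ((N + 1 : ℕ) : ℝ)⁻¹ *
          ∑ i ∈ Finset.range (N + 1), ‖ContinuousLinearMap.adjoint (T ^ i) ∘L T ^ i‖ := by
        rw [cesaroGram, norm_smul, norm_inv, RCLike.norm_natCast]
        gcongr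
        exact norm_sum_le _ _
    _ ≤ ((N + 1 : ℕ) : ℝ)⁻¹ * ∑ i ∈ Finset.range (N + 1), C ^ 2 := by
        gcongr with i
        rw [ContinuousLinearMap.norm_adjoint_comp_self, ← sq]
        gcongr
        exact hT i
    _ = C ^ 2 := by
        rw [Finset.sum_const, Finset.card_range, nsmul_eq_mul,
          inv_mul_cancel_left₀ (by positivity)]

theorem re_inner_cesaroGram_apply_self (x : E) :
    RCLike.re ⟪cesaroGram T N x, x⟫_𝕜 = cesaroMean (fun i ↦ ‖(T ^ i) x‖ ^ 2) N := by
  simp only [cesaroGram, cesaroMean, smul_apply, sum_apply, inner_smul_left, sum_inner, map_inv₀,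
    map_natCast, ContinuousLinearMap.apply_norm_sq_eq_inner_adjoint_left]
  rw [← map_sum, ← RCLike.ofReal_natCast, ← RCLike.ofReal_inv, RCLike.re_ofReal_mul]

theorem exists_isSelfAdjoint_invariant_of_norm_pow_le {C c : ℝ} (hT : ∀ n, ‖T ^ n‖ ≤ C)
    (hlow : ∀ x n, c * ‖x‖ ^ 2 ≤ ‖(T ^ n) x‖ ^ 2) :
    ∃ A : E →L[𝕜] E, IsSelfAdjoint A ∧ (∀ x, c * ‖x‖ ^ 2 ≤ RCLike.re ⟪A x, x⟫_𝕜) ∧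
      ∀ x, RCLike.re ⟪A (T x), T x⟫_𝕜 = RCLike.re ⟪A x, x⟫_𝕜 := by
  set φ := Ultrafilter.of (atTop : Filter ℕ)
  obtain ⟨A, hA⟩ :=
    exists_tendsto_inner_apply_of_norm_le (cesaroGram T) φ (norm_cesaroGram_le T · hT)
  have hmean (x : E) :
      Tendsto (cesaroMean fun i ↦ ‖(T ^ i) x‖ ^ 2) φ (𝓝 (RCLike.re ⟪A x, x⟫_𝕜)) := by
    simpa only [Function.comp_def, re_inner_cesaroGram_apply_self] using
      (RCLike.continuous_re.tendsto _).comp (hA x x)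
  refine ⟨A, isSelfAdjoint_of_tendsto_inner_apply (isSelfAdjoint_cesaroGram T) hA,
    fun x ↦ ge_of_tendsto' (hmean x) (le_cesaroMean (hlow x)), fun x ↦ ?_⟩
  have hshift : Tendsto (fun N ↦ cesaroMean (fun i ↦ ‖(T ^ i) (T x)‖ ^ 2) N -
      cesaroMean (fun i ↦ ‖(T ^ i) x‖ ^ 2) N) atTop (𝓝 0) := by
    have hpow (i : ℕ) : (T ^ i) (T x) = (T ^ (i + 1)) x := by rw [pow_succ, mul_apply_eq_comp]
    simp only [hpow]
    refine tendsto_cesaroMean_succ_sub (u := fun i ↦ ‖(T ^ i) x‖ ^ 2) (M := (C * ‖x‖) ^ 2)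
      fun i ↦ ?_
    rw [abs_of_nonneg (by positivity)]
    gcongr
    exact (T ^ i).le_of_opNorm_le (hT i) x
  have h := (hmean x).add (hshift.mono_left (Ultrafilter.of_le _))
  rw [add_zero] at h
  exact tendsto_nhds_unique (hmean (T x)) (h.congr fun N ↦ add_sub_cancel _ _)

end CesaroGram

section SquareRoot

variable {H : Type*} [NormedAddCommGroup H] [InnerProductSpace ℂ H] [CompleteSpace H]

theorem exists_equiv_norm_sq_eq_re_inner {A : H →L[ℂ] H} (hA : IsSelfAdjoint A) {c : ℝ}
    (hc : 0 < c) (hcoer : ∀ x, c * ‖x‖ ^ 2 ≤ RCLike.re ⟪A x, x⟫_ℂ) :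
    ∃ S : H ≃L[ℂ] H, ∀ x, ‖S x‖ ^ 2 = RCLike.re ⟪A x, x⟫_ℂ := by
  have hA_nonneg : 0 ≤ A := by
    rw [ContinuousLinearMap.nonneg_iff_isPositive, ContinuousLinearMap.isPositive_def']
    exact ⟨hA, fun x ↦ (mul_nonneg hc.le (sq_nonneg _)).trans (hcoer x)⟩
  have hA_unit : IsUnit A :=
    ContinuousLinearMap.isUnit_of_forall_le_norm_inner_map A (c := ⟨c, hc.le⟩) hc fun x ↦
      calc ‖x‖ ^ 2 * c ≤ RCLike.re ⟪A x, x⟫_ℂ := by rw [mul_comm]; exact hcoer x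
        _ ≤ ‖⟪A x, x⟫_ℂ‖ := RCLike.re_le_norm _
  have hS : IsUnit (CFC.sqrt A) := (CFC.isUnit_sqrt_iff A hA_nonneg).2 hA_unit
  refine ⟨.ofUnit hS.unit, fun x ↦ ?_⟩
  show ‖CFC.sqrt A x‖ ^ 2 = _
  rw [← inner_self_eq_norm_sq (𝕜 := ℂ), ← ContinuousLinearMap.adjoint_inner_left,
    (IsSelfAdjoint.of_nonneg (CFC.sqrt_nonneg A)).adjoint_eq, ← mul_apply_eq_comp,
    CFC.sqrt_mul_sqrt_self A hA_nonneg]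

end SquareRoot

/-- **Sz.-Nagy's theorem.** A bounded linear operator `T` on a complex Hilbert
space is similar to an isometry (i.e. `T = S⁻¹ ∘ U ∘ S` for some bounded
invertible `S` and linear isometry `U`) if and only if there is a constant
`k > 0` with `(1/k)‖x‖ ≤ ‖Tⁿx‖ ≤ k‖x‖` for all `x` and all `n : ℕ`. -/
theorem similar_to_isometry_iff_power_bounded_below_above
    {H : Type*} [NormedAddCommGroup H] [InnerProductSpace ℂ H] [CompleteSpace H]
    (T : H →L[ℂ] H) :
    (∃ (S : H ≃L[ℂ] H) (U : H →ₗᵢ[ℂ] H), ∀ x : H, T x = S.symm (U (S x))) ↔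
      (∃ k : ℝ, 0 < k ∧ ∀ (x : H) (n : ℕ),
        (1 / k) * ‖x‖ ≤ ‖(T ^ n) x‖ ∧ ‖(T ^ n) x‖ ≤ k * ‖x‖) := by
  rw [exists_linearIsometry_conj_iff]
  refine ⟨fun ⟨S, hS⟩ ↦ exists_norm_pow_apply_bounds_of_norm_apply_eq S hS, ?_⟩
  rintro ⟨k, hk, hb⟩
  have hpow (n : ℕ) : ‖T ^ n‖ ≤ k := (T ^ n).opNorm_le_bound hk.le fun x ↦ (hb x n).2
  have hlow (x : H) (n : ℕ) : (1 / k) ^ 2 * ‖x‖ ^ 2 ≤ ‖(T ^ n) x‖ ^ 2 := by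
    rw [← mul_pow]
    exact pow_le_pow_left₀ (by positivity) (hb x n).1 2
  obtain ⟨A, hA, hcoer, hinv⟩ := exists_isSelfAdjoint_invariant_of_norm_pow_le T hpow hlow
  obtain ⟨S, hS⟩ := exists_equiv_norm_sq_eq_re_inner hA (by positivity) hcoer
  exact ⟨S, fun x ↦ by rw [← sq_eq_sq₀ (norm_nonneg _) (norm_nonneg _), hS, hS, hinv]⟩
end

section
/- Let ε ∈ {+1, −1}, α ∈ ℝ, let γ₁, …, γₙ be distinct real numbers and μ₁, …, μₙ < 0, and define r : ℝ ∖ {γ₁, …, γₙ} → ℝ by r(x) = ε·(x + α + Σᵢ₌₁ⁿ μᵢ/(x − γᵢ)). Then for every p with 1 ≤ p < ∞, the composition map C_r : f ↦ f ∘ r is a linear isometry of L^p(ℝ) into itself: for every f ∈ L^p(ℝ), f ∘ r ∈ L^p(ℝ) and ‖f ∘ r‖_p = ‖f‖_p. -/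
open MeasureTheory Set Filter Polynomial Topology Function
open scoped ENNReal

/-!
Write `g x = x + α + ∑ μᵢ / (x - γᵢ)`. Because every `μᵢ < 0`, `g` is strictly increasing on
each of the `n + 1` gaps of `ℝ ∖ {γᵢ}` and runs from `-∞` to `+∞` there, so for `a < b` the
preimage `g⁻¹ (a, b)` is, up to the poles, the disjoint union of the intervals `(xₖ a, xₖ b)`,
`xₖ y` being the solution of `g x = y` in the `k`-th gap. Clearing denominators, the `xₖ y` are
the `n + 1` roots of a monic polynomial whose next coefficient is `α - y - ∑ γᵢ`, so by Vieta
`∑ₖ xₖ y = y - α + ∑ γᵢ`, and the preimage has total length `b - a`. Hence `g` and `-g` preserve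
Lebesgue measure, and composing with them is an isometry of every `Lᵖ`.
-/

theorem measurePreserving_of_volume_preimage_Ioo {f : ℝ → ℝ} (hf : Measurable f)
    (h : ∀ a b, a < b → volume (f ⁻¹' Ioo a b) = ENNReal.ofReal (b - a)) :
    MeasurePreserving f volume volume := by
  have hIoo : ∀ a b, volume.map f (Ioo a b) = volume (Ioo a b) := by
    intro a b
    rw [Measure.map_apply hf measurableSet_Ioo]
    rcases lt_or_ge a b with hab | hba
    · rw [h a b hab, Real.volume_Ioo]
    · simp [Ioo_eq_empty_of_le hba]
  have : IsLocallyFiniteMeasure (volume.map f) :=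
    ⟨fun x => ⟨Ioo (x - 1) (x + 1), Ioo_mem_nhds (by linarith) (by linarith),
      by rw [hIoo]; exact measure_Ioo_lt_top⟩⟩
  exact ⟨hf, Real.measure_ext_Ioo_rat fun a b => hIoo a b⟩

theorem Polynomial.nextCoeff_add_of_degree_lt {R : Type*} [Semiring R] {p q : R[X]}
    (hp : 0 < p.natDegree) (hq : q.degree < ↑(p.natDegree - 1)) :
    (p + q).nextCoeff = p.nextCoeff := by
  have hlt : q.degree < p.degree := by
    rw [degree_eq_natDegree (ne_zero_of_natDegree_gt hp)]
    exact hq.trans (by exact_mod_cast Nat.sub_lt hp one_pos)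
  have hdeg : (p + q).natDegree = p.natDegree := natDegree_add_eq_left_of_degree_lt hlt
  rw [nextCoeff_of_natDegree_pos (hdeg ▸ hp), nextCoeff_of_natDegree_pos hp, hdeg, coeff_add,
    coeff_eq_zero_of_degree_lt hq, add_zero]

theorem Polynomial.sum_eq_neg_nextCoeff_of_injective_of_isRoot {R ι : Type*} [CommRing R]
    [IsDomain R] [Fintype ι] {P : R[X]} (hP : P.Monic) (hdeg : P.natDegree = Fintype.card ι)
    {x : ι → R} (hx : Injective x) (hroot : ∀ i, P.IsRoot (x i)) :
    ∑ i, x i = -P.nextCoeff := by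
  have hroots : Finset.univ.val.map x = P.roots := by
    refine Multiset.eq_of_le_of_card_le ((Multiset.le_iff_subset (Finset.univ.nodup.map hx)).2
      fun y hy => ?_) ?_
    · obtain ⟨i, -, rfl⟩ := Multiset.mem_map.1 hy
      exact (mem_roots hP.ne_zero).2 (hroot i)
    · simpa [hdeg] using card_roots' P
  have hsplits : P.Splits := splits_iff_card_roots.2 (by simp [← hroots, hdeg])
  rw [hsplits.nextCoeff_eq_neg_sum_roots_of_monic hP, neg_neg, ← hroots]
  rfl

theorem StrictMonoOn.inter_preimage_Ioo {α β : Type*} [LinearOrder α] [Preorder β]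
    {f : α → β} {s : Set α} (hf : StrictMonoOn f s) (hs : s.OrdConnected) {a b : α}
    (ha : a ∈ s) (hb : b ∈ s) : s ∩ f ⁻¹' Ioo (f a) (f b) = Ioo a b := by
  ext x
  constructor
  · rintro ⟨hx, hax, hxb⟩
    exact ⟨(hf.lt_iff_lt ha hx).1 hax, (hf.lt_iff_lt hx hb).1 hxb⟩
  · rintro ⟨hax, hxb⟩
    have hx : x ∈ s := hs.out ha hb ⟨hax.le, hxb.le⟩
    exact ⟨hx, hf ha hx hax, hf hx hb hxb⟩

section PoleGap

variable {ι : Type*} (γ : ι → ℝ)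

/-- The component of `ℝ ∖ range γ` with left end `γ i` when `κ = i`; for `κ = ⊥`, the one
unbounded below. -/
def poleGap (κ : WithBot ι) : Set ℝ :=
  {x | κ.map γ < (x : WithBot ℝ) ∧ ∀ j, (γ j : WithBot ℝ) ≤ κ.map γ ∨ x < γ j}

variable {γ}

@[simp]
lemma mem_poleGap_bot {x : ℝ} : x ∈ poleGap γ ⊥ ↔ ∀ j, x < γ j := by
  simp [poleGap]

@[simp]
lemma mem_poleGap_coe {i : ι} {x : ℝ} :
    x ∈ poleGap γ i ↔ γ i < x ∧ ∀ j, γ j ≤ γ i ∨ x < γ j := by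
  simp [poleGap]

lemma poleGap_ordConnected (κ : WithBot ι) : (poleGap γ κ).OrdConnected :=
  ⟨fun _ hx _ hz _ hy => ⟨hx.1.trans_le (WithBot.coe_le_coe.2 hy.1),
    fun j => (hz.2 j).imp_right hy.2.trans_lt⟩⟩

lemma ne_of_mem_poleGap {κ : WithBot ι} {x : ℝ} (hx : x ∈ poleGap γ κ) (j : ι) :
    x ≠ γ j := by
  rintro rfl
  rcases hx.2 j with h | h
  · exact h.not_gt hx.1
  · exact h.false

lemma map_le_map_of_mem_poleGap {κ κ' : WithBot ι} {x : ℝ} (hx : x ∈ poleGap γ κ)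
    (hx' : x ∈ poleGap γ κ') : κ.map γ ≤ κ'.map γ := by
  cases κ with
  | bot => exact bot_le
  | coe i => exact (hx'.2 i).resolve_right (WithBot.coe_lt_coe.1 hx.1).not_gt

lemma poleGap_pairwiseDisjoint (hγ : Injective γ) : Pairwise (Disjoint on poleGap γ) :=
  fun _ _ hne => disjoint_left.2 fun _ hx hx' => hne <| WithBot.map_injective hγ <|
    (map_le_map_of_mem_poleGap hx hx').antisymm (map_le_map_of_mem_poleGap hx' hx)

lemma iUnion_poleGap [Finite ι] : ⋃ κ, poleGap γ κ = (range γ)ᶜ := by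
  ext x
  simp only [mem_iUnion, mem_compl_iff, mem_range, not_exists]
  refine ⟨fun ⟨κ, hx⟩ j => (ne_of_mem_poleGap hx j).symm, fun hx => ?_⟩
  by_cases h : ∃ j, γ j < x
  · obtain ⟨i, hi, hmax⟩ := exists_max_image {j | γ j < x} γ (toFinite _) h
    refine ⟨i, mem_poleGap_coe.2 ⟨hi, fun j => ?_⟩⟩
    rcases Ne.lt_or_gt (hx j) with hj | hj
    · exact .inl (hmax j hj)
    · exact .inr hj
  · push Not at h
    exact ⟨⊥, mem_poleGap_bot.2 fun j => (h j).lt_of_ne (Ne.symm (hx j))⟩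

end PoleGap

lemma tendsto_div_sub_nhdsGT_atBot {c : ℝ} (hc : c < 0) (a : ℝ) :
    Tendsto (fun x => c / (x - a)) (𝓝[>] a) atBot := by
  have h : Tendsto (fun x => x - a) (𝓝[>] a) (𝓝[>] 0) :=
    tendsto_nhdsWithin_iff.2 ⟨((continuous_sub_right a).tendsto' a 0 (sub_self a)).mono_left
      nhdsWithin_le_nhds, eventually_mem_nhdsWithin.mono fun _ hx => mem_Ioi.2 (sub_pos.2 hx)⟩
  simpa only [div_eq_mul_inv, Pi.inv_apply] using
    h.inv_tendsto_nhdsGT_zero.const_mul_atTop_of_neg hc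

lemma tendsto_div_sub_nhdsLT_atTop {c : ℝ} (hc : c < 0) (a : ℝ) :
    Tendsto (fun x => c / (x - a)) (𝓝[<] a) atTop := by
  have h : Tendsto (fun x => x - a) (𝓝[<] a) (𝓝[<] 0) :=
    tendsto_nhdsWithin_iff.2 ⟨((continuous_sub_right a).tendsto' a 0 (sub_self a)).mono_left
      nhdsWithin_le_nhds, eventually_mem_nhdsWithin.mono fun _ hx => mem_Iio.2 (sub_neg.2 hx)⟩
  simpa only [div_eq_mul_inv, Pi.inv_apply] using
    h.inv_tendsto_nhdsLT_zero.const_mul_atBot_of_neg hc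

lemma div_sub_le_div_sub_of_notMem_Icc {c a u v : ℝ} (hc : c ≤ 0) (huv : u ≤ v)
    (ha : a ∉ Icc u v) : c / (u - a) ≤ c / (v - a) := by
  have hpos : 0 < (u - a) * (v - a) := by
    rcases not_and_or.1 ha with hua | hav
    · exact mul_pos (by linarith [not_le.1 hua]) (by linarith [not_le.1 hua])
    · exact mul_pos_of_neg_of_neg (by linarith [not_le.1 hav]) (by linarith [not_le.1 hav])
  have hdiff : c / (v - a) - c / (u - a) = c * (u - v) / ((u - a) * (v - a)) := by
    rw [div_sub_div _ _ (right_ne_zero_of_mul hpos.ne') (left_ne_zero_of_mul hpos.ne')]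
    ring_nf
  have : 0 ≤ c / (v - a) - c / (u - a) :=
    hdiff ▸ div_nonneg (mul_nonneg_of_nonpos_of_nonpos hc (by linarith)) hpos.le
  linarith

section PolyaSzegoFun

variable {ι : Type*} [Fintype ι] (α : ℝ) (γ μ : ι → ℝ)

noncomputable def polyaSzegoFun (x : ℝ) : ℝ :=
  x + α + ∑ i, μ i / (x - γ i)

variable {α γ μ}

lemma measurable_polyaSzegoFun : Measurable (polyaSzegoFun α γ μ) := by
  unfold polyaSzegoFun
  fun_prop

lemma continuousAt_polyaSzegoFun {x : ℝ} (hx : ∀ i, x ≠ γ i) :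
    ContinuousAt (polyaSzegoFun α γ μ) x := by
  unfold polyaSzegoFun
  fun_prop (disch := exact sub_ne_zero.2 (hx _))

lemma tendsto_polyaSzegoFun_atBot : Tendsto (polyaSzegoFun α γ μ) atBot atBot := by
  have hsum : Tendsto (fun x => ∑ i, μ i / (x - γ i)) atBot (𝓝 0) := by
    simpa [← sub_eq_add_neg] using tendsto_finsetSum _ fun i _ =>
      tendsto_const_nhds.div_atBot (tendsto_atBot_add_const_right _ (-γ i) tendsto_id)
  exact (tendsto_atBot_add_const_right _ α tendsto_id).atBot_add hsum

lemma tendsto_polyaSzegoFun_atTop : Tendsto (polyaSzegoFun α γ μ) atTop atTop := by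
  have hsum : Tendsto (fun x => ∑ i, μ i / (x - γ i)) atTop (𝓝 0) := by
    simpa [← sub_eq_add_neg] using tendsto_finsetSum _ fun i _ =>
      tendsto_const_nhds.div_atTop (tendsto_atTop_add_const_right _ (-γ i) tendsto_id)
  exact (tendsto_atTop_add_const_right _ α tendsto_id).atTop_add hsum

lemma strictMonoOn_polyaSzegoFun (hμ : ∀ i, μ i ≤ 0) {s : Set ℝ} (hs : s.OrdConnected)
    (hpole : ∀ i, γ i ∉ s) : StrictMonoOn (polyaSzegoFun α γ μ) s := by
  intro u hu v hv huv
  have hterm : ∀ i, μ i / (u - γ i) ≤ μ i / (v - γ i) := fun i =>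
    div_sub_le_div_sub_of_notMem_Icc (hμ i) huv.le fun hi => hpole i (hs.out hu hv hi)
  unfold polyaSzegoFun
  linarith [Finset.sum_le_sum fun i (_ : i ∈ Finset.univ) => hterm i]

lemma strictMonoOn_polyaSzegoFun_poleGap (hμ : ∀ i, μ i ≤ 0) (κ : WithBot ι) :
    StrictMonoOn (polyaSzegoFun α γ μ) (poleGap γ κ) :=
  strictMonoOn_polyaSzegoFun hμ (poleGap_ordConnected κ) fun i hi => ne_of_mem_poleGap hi i rfl

lemma polyaSzegoFun_eq_div_add [DecidableEq ι] (j : ι) : polyaSzegoFun α γ μ =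
    fun x => μ j / (x - γ j) + (x + α + ∑ i ∈ Finset.univ.erase j, μ i / (x - γ i)) := by
  ext x
  rw [polyaSzegoFun, ← Finset.add_sum_erase _ _ (Finset.mem_univ j)]
  ring

lemma continuousAt_add_sum_erase (hγ : Injective γ) [DecidableEq ι] (j : ι) :
    ContinuousAt (fun x => x + α + ∑ i ∈ Finset.univ.erase j, μ i / (x - γ i)) (γ j) := by
  refine (continuousAt_id.add continuousAt_const).add (tendsto_finsetSum _ fun i hi => ?_)
  exact continuousAt_const.div (continuousAt_id.sub continuousAt_const)
    (sub_ne_zero.2 (hγ.ne (Finset.ne_of_mem_erase hi).symm))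

lemma tendsto_polyaSzegoFun_nhdsGT (hγ : Injective γ) {j : ι} (hμ : μ j < 0) :
    Tendsto (polyaSzegoFun α γ μ) (𝓝[>] γ j) atBot := by
  classical
  rw [polyaSzegoFun_eq_div_add j]
  exact (tendsto_div_sub_nhdsGT_atBot hμ _).atBot_add
    (continuousAt_add_sum_erase hγ j).continuousWithinAt

lemma tendsto_polyaSzegoFun_nhdsLT (hγ : Injective γ) {j : ι} (hμ : μ j < 0) :
    Tendsto (polyaSzegoFun α γ μ) (𝓝[<] γ j) atTop := by
  classical
  rw [polyaSzegoFun_eq_div_add j]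
  exact (tendsto_div_sub_nhdsLT_atTop hμ _).atTop_add
    (continuousAt_add_sum_erase hγ j).continuousWithinAt

lemma exists_mem_poleGap_polyaSzegoFun_lt (hγ : Injective γ) (hμ : ∀ i, μ i < 0)
    (κ : WithBot ι) (y : ℝ) : ∃ x ∈ poleGap γ κ, polyaSzegoFun α γ μ x < y := by
  cases κ with
  | bot =>
    have hgap : ∀ᶠ x in atBot, x ∈ poleGap γ ⊥ := by
      simpa using eventually_all.2 fun j => eventually_lt_atBot (γ j)
    exact (hgap.and (tendsto_polyaSzegoFun_atBot.eventually_lt_atBot y)).exists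
  | coe i =>
    have hright : ∀ j, ∀ᶠ x in 𝓝[>] γ i, γ j ≤ γ i ∨ x < γ j := fun j => by
      rcases le_or_gt (γ j) (γ i) with h | h
      · exact .of_forall fun _ => .inl h
      · exact (eventually_nhdsWithin_of_eventually_nhds (eventually_lt_nhds h)).mono
          fun _ => .inr
    have hgap : ∀ᶠ x in 𝓝[>] γ i, x ∈ poleGap γ i := by
      filter_upwards [self_mem_nhdsWithin, eventually_all.2 hright] with x hx hj
      exact mem_poleGap_coe.2 ⟨hx, hj⟩
    exact (hgap.and ((tendsto_polyaSzegoFun_nhdsGT hγ (hμ i)).eventually_lt_atBot y)).exists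

lemma exists_mem_poleGap_lt_polyaSzegoFun (hγ : Injective γ) (hμ : ∀ i, μ i < 0)
    (κ : WithBot ι) (y : ℝ) : ∃ x ∈ poleGap γ κ, y < polyaSzegoFun α γ μ x := by
  obtain ⟨x₀, hx₀, -⟩ := exists_mem_poleGap_polyaSzegoFun_lt (α := α) hγ hμ κ 0
  have hmem : ∀ x, x₀ < x → (∀ j, (γ j : WithBot ℝ) ≤ κ.map γ ∨ x < γ j) →
      x ∈ poleGap γ κ := fun x hx h => ⟨hx₀.1.trans (WithBot.coe_lt_coe.2 hx), h⟩
  by_cases hs : {j | κ.map γ < γ j}.Nonempty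
  · obtain ⟨j, hj, hmin⟩ := exists_min_image _ γ (toFinite _) hs
    have hx₀j : x₀ < γ j := (hx₀.2 j).resolve_left (not_le.2 hj)
    have hgap : ∀ᶠ x in 𝓝[<] γ j, x ∈ poleGap γ κ := by
      filter_upwards [Ioo_mem_nhdsLT hx₀j] with x hx
      refine hmem x hx.1 fun j' => or_iff_not_imp_left.2 fun hj' => ?_
      exact hx.2.trans_le (hmin j' (not_le.1 hj'))
    exact (hgap.and ((tendsto_polyaSzegoFun_nhdsLT hγ (hμ j)).eventually_gt_atTop y)).exists
  · have hgap : ∀ᶠ x in atTop, x ∈ poleGap γ κ := by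
      filter_upwards [eventually_gt_atTop x₀] with x hx
      exact hmem x hx fun j => .inl (not_lt.1 fun hj => hs ⟨j, hj⟩)
    exact (hgap.and (tendsto_polyaSzegoFun_atTop.eventually_gt_atTop y)).exists

lemma surjOn_polyaSzegoFun_poleGap (hγ : Injective γ) (hμ : ∀ i, μ i < 0) (κ : WithBot ι) :
    SurjOn (polyaSzegoFun α γ μ) (poleGap γ κ) univ := by
  have hcont : ContinuousOn (polyaSzegoFun α γ μ) (poleGap γ κ) := fun x hx =>
    (continuousAt_polyaSzegoFun (ne_of_mem_poleGap hx)).continuousWithinAt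
  have himage := ((poleGap_ordConnected κ).isPreconnected.image _ hcont).eq_univ_of_unbounded
    (fun ⟨b, hb⟩ => by
      obtain ⟨x, hx, hlt⟩ := exists_mem_poleGap_polyaSzegoFun_lt (α := α) hγ hμ κ b
      exact (hb (mem_image_of_mem _ hx)).not_gt hlt)
    (fun ⟨b, hb⟩ => by
      obtain ⟨x, hx, hlt⟩ := exists_mem_poleGap_lt_polyaSzegoFun (α := α) hγ hμ κ b
      exact (hb (mem_image_of_mem _ hx)).not_gt hlt)
  exact himage.symm.subset

variable (α γ μ) in
noncomputable def poleGapRoot (κ : WithBot ι) (y : ℝ) : ℝ :=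
  invFunOn (polyaSzegoFun α γ μ) (poleGap γ κ) y

lemma poleGapRoot_mem (hγ : Injective γ) (hμ : ∀ i, μ i < 0) (κ : WithBot ι) (y : ℝ) :
    poleGapRoot α γ μ κ y ∈ poleGap γ κ :=
  invFunOn_mem (surjOn_polyaSzegoFun_poleGap hγ hμ κ (mem_univ y))

lemma polyaSzegoFun_poleGapRoot (hγ : Injective γ) (hμ : ∀ i, μ i < 0) (κ : WithBot ι)
    (y : ℝ) : polyaSzegoFun α γ μ (poleGapRoot α γ μ κ y) = y :=
  invFunOn_eq (surjOn_polyaSzegoFun_poleGap hγ hμ κ (mem_univ y))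

section Numerator

lemma natDegree_X_add_C_mul_nodal (c : ℝ) :
    ((X + C c) * Lagrange.nodal Finset.univ γ).natDegree = Fintype.card ι + 1 := by
  rw [(monic_X_add_C c).natDegree_mul Lagrange.nodal_monic, natDegree_X_add_C,
    Lagrange.natDegree_nodal, Finset.card_univ, add_comm]

lemma degree_X_add_C_mul_nodal (c : ℝ) :
    ((X + C c) * Lagrange.nodal Finset.univ γ).degree = ↑(Fintype.card ι + 1) := by
  rw [degree_eq_natDegree ((monic_X_add_C c).mul Lagrange.nodal_monic).ne_zero,
    natDegree_X_add_C_mul_nodal]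

variable [DecidableEq ι]

variable (α γ μ) in
noncomputable def polyaSzegoNumerator (y : ℝ) : ℝ[X] :=
  (X + C (α - y)) * Lagrange.nodal Finset.univ γ +
    ∑ i, μ i • Lagrange.nodal (Finset.univ.erase i) γ

lemma eval_polyaSzegoNumerator {x : ℝ} (hx : ∀ i, x ≠ γ i) (y : ℝ) :
    (polyaSzegoNumerator α γ μ y).eval x =
      (polyaSzegoFun α γ μ x - y) * ∏ i, (x - γ i) := by
  have hterm : ∀ i, μ i * ∏ j ∈ Finset.univ.erase i, (x - γ j) =
      μ i / (x - γ i) * ∏ j, (x - γ j) := fun i => by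
    rw [← Finset.mul_prod_erase _ _ (Finset.mem_univ i)]
    field_simp [sub_ne_zero.2 (hx i)]
  simp only [polyaSzegoNumerator, polyaSzegoFun, eval_add, eval_mul, eval_X, eval_C,
    Lagrange.eval_nodal, eval_finsetSum, eval_smul, smul_eq_mul, hterm, ← Finset.sum_mul]
  ring

lemma degree_sum_smul_nodal_erase_lt :
    (∑ i, μ i • Lagrange.nodal (Finset.univ.erase i) γ).degree < Fintype.card ι :=
  mem_degreeLT.1 <| Submodule.sum_smul_mem _ _ fun i _ => mem_degreeLT.2 <| by
    have : 0 < Fintype.card ι := Fintype.card_pos_iff.2 ⟨i⟩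
    rw [Lagrange.degree_nodal, Finset.card_erase_of_mem (Finset.mem_univ i), Finset.card_univ]
    exact_mod_cast Nat.sub_lt this one_pos

lemma degree_sum_smul_nodal_erase_lt_degree (c : ℝ) :
    (∑ i, μ i • Lagrange.nodal (Finset.univ.erase i) γ).degree <
      ((X + C c) * Lagrange.nodal Finset.univ γ).degree := by
  rw [degree_X_add_C_mul_nodal]
  exact degree_sum_smul_nodal_erase_lt.trans (by exact_mod_cast Nat.lt_succ_self _)

lemma polyaSzegoNumerator_monic (y : ℝ) : (polyaSzegoNumerator α γ μ y).Monic :=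
  ((monic_X_add_C _).mul Lagrange.nodal_monic).add_of_left
    (degree_sum_smul_nodal_erase_lt_degree _)

lemma natDegree_polyaSzegoNumerator (y : ℝ) :
    (polyaSzegoNumerator α γ μ y).natDegree = Fintype.card ι + 1 := by
  rw [polyaSzegoNumerator, natDegree_add_eq_left_of_degree_lt
    (degree_sum_smul_nodal_erase_lt_degree _), natDegree_X_add_C_mul_nodal]

lemma nextCoeff_polyaSzegoNumerator (y : ℝ) :
    (polyaSzegoNumerator α γ μ y).nextCoeff = α - y - ∑ i, γ i := by
  rw [polyaSzegoNumerator,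
    nextCoeff_add_of_degree_lt (by rw [natDegree_X_add_C_mul_nodal]; omega) (by
      rw [natDegree_X_add_C_mul_nodal, Nat.add_sub_cancel]; exact degree_sum_smul_nodal_erase_lt),
    (monic_X_add_C _).nextCoeff_mul Lagrange.nodal_monic, nextCoeff_X_add_C, Lagrange.nodal,
    prod_X_sub_C_nextCoeff]
  ring

end Numerator

variable (hγ : Injective γ) (hμ : ∀ i, μ i < 0)
include hγ hμ

lemma poleGapRoot_injective (y : ℝ) : Injective fun κ => poleGapRoot α γ μ κ y := by
  intro κ κ' (h : poleGapRoot α γ μ κ y = poleGapRoot α γ μ κ' y)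
  by_contra hne
  exact disjoint_left.1 (poleGap_pairwiseDisjoint hγ hne) (poleGapRoot_mem hγ hμ κ y)
    (h ▸ poleGapRoot_mem hγ hμ κ' y)

lemma sum_poleGapRoot (y : ℝ) : ∑ κ, poleGapRoot α γ μ κ y = y - α + ∑ i, γ i := by
  classical
  have hroot (κ) : (polyaSzegoNumerator α γ μ y).IsRoot (poleGapRoot α γ μ κ y) := by
    rw [IsRoot, eval_polyaSzegoNumerator (ne_of_mem_poleGap (poleGapRoot_mem hγ hμ κ y)),
      polyaSzegoFun_poleGapRoot hγ hμ, sub_self, zero_mul]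
  rw [sum_eq_neg_nextCoeff_of_injective_of_isRoot (polyaSzegoNumerator_monic y)
    (by rw [natDegree_polyaSzegoNumerator]; exact Fintype.card_option.symm)
    (poleGapRoot_injective hγ hμ y) hroot, nextCoeff_polyaSzegoNumerator]
  ring

lemma poleGapRoot_strictMono (κ : WithBot ι) : StrictMono (poleGapRoot α γ μ κ) := by
  intro a b hab
  refine ((strictMonoOn_polyaSzegoFun_poleGap (α := α) (fun i => (hμ i).le) κ).lt_iff_lt
    (poleGapRoot_mem hγ hμ κ a) (poleGapRoot_mem hγ hμ κ b)).1 ?_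
  rwa [polyaSzegoFun_poleGapRoot hγ hμ, polyaSzegoFun_poleGapRoot hγ hμ]

lemma poleGap_inter_preimage_Ioo (κ : WithBot ι) (a b : ℝ) :
    poleGap γ κ ∩ polyaSzegoFun α γ μ ⁻¹' Ioo a b =
      Ioo (poleGapRoot α γ μ κ a) (poleGapRoot α γ μ κ b) := by
  simpa only [polyaSzegoFun_poleGapRoot hγ hμ] using
    (strictMonoOn_polyaSzegoFun_poleGap (α := α) (fun i => (hμ i).le) κ).inter_preimage_Ioo
      (poleGap_ordConnected κ) (poleGapRoot_mem (α := α) hγ hμ κ a)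
      (poleGapRoot_mem (α := α) hγ hμ κ b)

lemma volume_preimage_polyaSzegoFun_Ioo {a b : ℝ} (hab : a < b) :
    volume (polyaSzegoFun α γ μ ⁻¹' Ioo a b) = ENNReal.ofReal (b - a) := by
  have hpreimage : polyaSzegoFun α γ μ ⁻¹' Ioo a b \ range γ =
      ⋃ κ, Ioo (poleGapRoot α γ μ κ a) (poleGapRoot α γ μ κ b) := by
    simp_rw [← poleGap_inter_preimage_Ioo hγ hμ, ← iUnion_inter, iUnion_poleGap, sdiff_eq,
      inter_comm]
  have hdisj : Pairwise (Disjoint on fun κ => Ioo (poleGapRoot α γ μ κ a)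
      (poleGapRoot α γ μ κ b)) := fun κ κ' hne => by
    simp only [onFun, ← poleGap_inter_preimage_Ioo hγ hμ]
    exact (poleGap_pairwiseDisjoint hγ hne).mono inter_subset_left inter_subset_left
  rw [← measure_sdiff_null ((finite_range γ).measure_zero volume), hpreimage,
    measure_iUnion hdisj fun _ => measurableSet_Ioo, tsum_fintype]
  simp_rw [Real.volume_Ioo]
  rw [← ENNReal.ofReal_sum_of_nonneg fun κ _ =>
      sub_nonneg.2 (poleGapRoot_strictMono hγ hμ κ hab).le, Finset.sum_sub_distrib,
    sum_poleGapRoot hγ hμ, sum_poleGapRoot hγ hμ]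
  ring_nf

lemma measurePreserving_polyaSzegoFun :
    MeasurePreserving (polyaSzegoFun α γ μ) volume volume :=
  measurePreserving_of_volume_preimage_Ioo measurable_polyaSzegoFun fun _ _ hab =>
    volume_preimage_polyaSzegoFun_Ioo hγ hμ hab

end PolyaSzegoFun

/-- A map `r(x) = ±(x + α + ∑ μᵢ/(x - γᵢ))` with distinct real `γᵢ` and
`μᵢ < 0` induces an isometric composition operator `f ↦ f ∘ r` on `L^p(ℝ)`
for every `1 ≤ p < ∞`: if `f ∈ L^p(ℝ)` then `f ∘ r ∈ L^p(ℝ)` with the same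
`L^p`-norm. -/
theorem polyaSzego_comp_isometry_Lp
    (ε : ℝ) (hε : ε = 1 ∨ ε = -1) (α : ℝ) (n : ℕ)
    (γ : Fin n → ℝ) (hγ : Function.Injective γ)
    (μ : Fin n → ℝ) (hμ : ∀ i, μ i < 0)
    (r : ℝ → ℝ) (hr : ∀ x : ℝ, (∀ i, x ≠ γ i) →
      r x = ε * (x + α + ∑ i, μ i / (x - γ i))) :
    ∀ p : ℝ≥0∞, 1 ≤ p → p ≠ ⊤ → ∀ f : ℝ → ℂ, MemLp f p volume →
      MemLp (f ∘ r) p volume ∧ eLpNorm (f ∘ r) p volume = eLpNorm f p volume := by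
  intro p _ _ f hf
  have hpreserving : MeasurePreserving (fun x => ε * polyaSzegoFun α γ μ x) volume volume := by
    rcases hε with rfl | rfl
    · simpa using measurePreserving_polyaSzegoFun hγ hμ
    · simpa [comp_def] using (Measure.measurePreserving_neg volume).comp
        (measurePreserving_polyaSzegoFun hγ hμ)
  have hae : f ∘ r =ᵐ[volume] f ∘ fun x => ε * polyaSzegoFun α γ μ x := by
    filter_upwards [(finite_range γ).countable.ae_notMem volume] with x hx
    simp only [comp_apply, hr x fun i h => hx ⟨i, h.symm⟩, polyaSzegoFun]
  exact ⟨(hf.comp_measurePreserving hpreserving).ae_eq hae.symm,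
    (eLpNorm_congr_ae hae).trans (eLpNorm_comp_measurePreserving hf.1 hpreserving)⟩
end

section
/- Let a be a point of the unit circle 𝕋 = {z ∈ ℂ : |z| = 1}, let Ω ⊆ ℂ be an open set containing the closed unit disc with the point a removed (i.e., {z : |z| ≤ 1} ∖ {a} ⊆ Ω), and let φ be analytic on Ω with φ(𝔻) ⊆ 𝔻, where 𝔻 = {z : |z| < 1}. Then the set K_φ = {z ∈ 𝕋 ∖ {a} : |φ(z)| = 1} has normalized Lebesgue arc-length measure m(K_φ) equal to either 0 or 1. -/
/-!
On the arc `𝕋 ∖ {a}`, parametrized by `θ ∈ (arg a, arg a + 2π)`, the function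
`θ ↦ ‖φ (exp (θ I))‖²` is real analytic. By the identity theorem it is either identically `1`
there, or it takes the value `1` only on a discrete, hence countable and null, set. Since the
parametrization is `2π`-periodic, either alternative transfers to the normalized arc-length
measure of `K_φ`, giving `1` or `0` respectively.
-/

open MeasureTheory

/-- Normalized Lebesgue arc-length measure of a subset of the unit circle
`𝕋 ⊆ ℂ`, computed by pulling back to the parametrization `θ ↦ exp(iθ)`,
`θ ∈ [0, 2π)`, and dividing by `2π` (so that the whole circle has measure 1). -/
noncomputable def circleMeasure (E : Set ℂ) : ENNReal :=
  volume {θ : ℝ | θ ∈ Set.Ico (0 : ℝ) (2 * Real.pi) ∧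
    Complex.exp (θ * Complex.I) ∈ E} / ENNReal.ofReal (2 * Real.pi)

open Complex Set Function Filter

theorem exists_add_zsmul_mem_Ioo {α : Type*} [AddCommGroup α] [LinearOrder α]
    [IsOrderedAddMonoid α] [Archimedean α] {p : α} (hp : 0 < p) (u : α) {x : α}
    (hx : x ∉ range fun n : ℤ => u + n • p) : ∃ n : ℤ, x + n • p ∈ Ioo u (u + p) := by
  refine ⟨-toIocDiv hp u x, ?_⟩
  obtain ⟨hlo, hhi⟩ := toIocMod_mem_Ioc hp u x
  rw [toIocMod, sub_eq_add_neg, ← neg_zsmul] at hlo hhi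
  refine ⟨hlo, hhi.lt_of_ne fun h => hx ⟨toIocDiv hp u x + 1, ?_⟩⟩
  show u + (toIocDiv hp u x + 1) • p = x
  rw [add_zsmul, one_zsmul, ← add_assoc, add_right_comm, ← h, neg_zsmul]
  abel

section Periodic

variable {β : Type*} {μ : Measure ℝ} [NullSingletonClass μ] {g : ℝ → β} {p u : ℝ} {K : Set β}

theorem Function.Periodic.measure_preimage_eq_zero_of_inter_Ioo [μ.IsAddRightInvariant]
    (hg : Periodic g p) (hp : 0 < p) (h : μ (g ⁻¹' K ∩ Ioo u (u + p)) = 0) :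
    μ (g ⁻¹' K) = 0 := by
  have hcover : g ⁻¹' K ⊆ (range fun n : ℤ => u + n • p) ∪
      ⋃ n : ℤ, (· + n • p) ⁻¹' (g ⁻¹' K ∩ Ioo u (u + p)) := by
    intro x hx
    by_cases hx' : x ∈ range fun n : ℤ => u + n • p
    · exact Or.inl hx'
    · obtain ⟨n, hn⟩ := exists_add_zsmul_mem_Ioo hp u hx'
      exact Or.inr (mem_iUnion.2 ⟨n, show g (x + n • p) ∈ K by rwa [hg.zsmul n x], hn⟩)
  refine measure_mono_null hcover (measure_union_null ((countable_range _).measure_zero μ) ?_)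
  exact measure_iUnion_null fun n => by rwa [measure_preimage_add_right]

theorem Function.Periodic.measure_compl_preimage_eq_zero_of_Ioo_subset
    (hg : Periodic g p) (hp : 0 < p) (h : Ioo u (u + p) ⊆ g ⁻¹' K) :
    μ (g ⁻¹' K)ᶜ = 0 := by
  refine measure_mono_null (fun x hx => ?_)
    ((countable_range fun n : ℤ => u + n • p).measure_zero μ)
  by_contra hx'
  obtain ⟨n, hn⟩ := exists_add_zsmul_mem_Ioo hp u hx'
  have hK : g (x + n • p) ∈ K := h hn
  exact hx (by rwa [hg.zsmul n x] at hK)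

end Periodic

theorem AnalyticOnNhd.eqOn_or_measure_preimage_inter_eq_zero {E : Type*} [NormedAddCommGroup E]
    [NormedSpace ℝ E] {μ : Measure ℝ} [NullSingletonClass μ] {f : ℝ → E} {U : Set ℝ}
    (hf : AnalyticOnNhd ℝ f U) (hU : IsPreconnected U) (c : E) :
    EqOn f (fun _ => c) U ∨ μ (f ⁻¹' {c} ∩ U) = 0 := by
  refine (hf.eqOn_or_eventually_ne_of_preconnected analyticOnNhd_const hU).imp_right fun h => ?_
  have hae := ae_restrict_le_codiscreteWithin (μ := μ) hU.measurableSet h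
  rw [mem_ae_iff, Measure.restrict_apply' hU.measurableSet] at hae
  simp only [ne_eq, compl_ofPred, not_not] at hae
  exact hae

theorem AnalyticAt.norm_sq {E : Type*} [NormedAddCommGroup E] [InnerProductSpace ℝ E]
    {f : ℝ → E} {x : ℝ} (hf : AnalyticAt ℝ f x) : AnalyticAt ℝ (fun y => ‖f y‖ ^ 2) x := by
  have hinner : AnalyticAt ℝ (fun q : E × E => innerSL ℝ q.1 q.2) (f x, f x) :=
    (innerSL ℝ).analyticAt_bilinear _
  simpa [Function.comp_def, real_inner_self_eq_norm_sq] using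
    hinner.comp (f := fun y => (f y, f y)) (hf.prod hf)

theorem AnalyticAt.comp_exp_mul_I {φ : ℂ → ℂ} {θ : ℝ} (hφ : AnalyticAt ℂ φ (exp (θ * I))) :
    AnalyticAt ℝ (fun t : ℝ => φ (exp (t * I))) θ := by
  have hexp : AnalyticAt ℝ (fun t : ℝ => exp (t * I)) θ :=
    (analyticAt_cexp.restrictScalars (𝕜 := ℝ)).comp ((ofRealCLM.analyticAt θ).mul analyticAt_const)
  exact (hφ.restrictScalars (𝕜 := ℝ)).comp (f := fun t : ℝ => exp (t * I)) hexp

theorem exp_mul_I_ne_of_mem_Ioo_arg {a : ℂ} {θ : ℝ}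
    (hθ : θ ∈ Ioo (arg a) (arg a + 2 * Real.pi)) : exp (θ * I) ≠ a := by
  rintro rfl
  rw [arg_exp_mul_I] at hθ
  -- `θ` and `arg (exp (θ I))` differ by `n • 2π`, so `0 < n < 1`
  set n := toIocDiv Real.two_pi_pos (-Real.pi) θ
  have hn : θ - toIocMod Real.two_pi_pos (-Real.pi) θ = n * (2 * Real.pi) := by
    rw [self_sub_toIocMod, zsmul_eq_mul]
  have hpos : (0 : ℝ) < n := by nlinarith [hθ.1, Real.pi_pos]
  have hlt : (n : ℝ) < 1 := by nlinarith [hθ.2, Real.pi_pos]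
  have : 0 < n := by exact_mod_cast hpos
  have : n < 1 := by exact_mod_cast hlt
  omega

theorem circleMeasure_eq_zero_of_preimage {E : Set ℂ}
    (h : volume ((fun θ : ℝ => exp (θ * I)) ⁻¹' E) = 0) : circleMeasure E = 0 := by
  rw [circleMeasure, measure_mono_null (fun θ hθ => hθ.2) h, ENNReal.zero_div]

theorem circleMeasure_eq_one_of_compl_preimage {E : Set ℂ}
    (h : volume ((fun θ : ℝ => exp (θ * I)) ⁻¹' E)ᶜ = 0) : circleMeasure E = 1 := by
  change volume (Ico 0 (2 * Real.pi) ∩ (fun θ : ℝ => exp (θ * I)) ⁻¹' E) / _ = 1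
  rw [measure_inter_conull h, Real.volume_Ico, sub_zero]
  exact ENNReal.div_self (by simpa using Real.two_pi_pos) ENNReal.ofReal_ne_top

theorem measure_eq_one_inner_or_zero_general
    (a : ℂ)
    (Ω : Set ℂ) (hΩ : IsOpen Ω)
    (hΩsub : Metric.closedBall (0 : ℂ) 1 \ {a} ⊆ Ω)
    (φ : ℂ → ℂ) (hφ : DifferentiableOn ℂ φ Ω) :
    circleMeasure {z : ℂ | ‖z‖ = 1 ∧ z ≠ a ∧ ‖φ z‖ = 1} = 0 ∨
    circleMeasure {z : ℂ | ‖z‖ = 1 ∧ z ≠ a ∧ ‖φ z‖ = 1} = 1 := by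
  have hper : Periodic (fun θ : ℝ => exp (θ * I)) (2 * Real.pi) := fun θ => by
    push_cast; exact exp_mul_I_periodic θ
  set J := Ioo (arg a) (arg a + 2 * Real.pi)
  have hJΩ : ∀ θ ∈ J, exp (θ * I) ∈ Ω := fun θ hθ =>
    hΩsub ⟨by simp, exp_mul_I_ne_of_mem_Ioo_arg hθ⟩
  have hF : AnalyticOnNhd ℝ (fun θ : ℝ => ‖φ (exp (θ * I))‖ ^ 2) J := fun θ hθ =>
    ((hφ.analyticOnNhd hΩ _ (hJΩ θ hθ)).comp_exp_mul_I).norm_sq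
  rcases hF.eqOn_or_measure_preimage_inter_eq_zero (μ := volume) isPreconnected_Ioo 1 with h | h
  · refine Or.inr (circleMeasure_eq_one_of_compl_preimage
      (hper.measure_compl_preimage_eq_zero_of_Ioo_subset Real.two_pi_pos
        fun θ hθ => ⟨by simp, exp_mul_I_ne_of_mem_Ioo_arg hθ, ?_⟩))
    exact (pow_eq_one_iff_of_nonneg (norm_nonneg _) two_ne_zero).mp (h hθ)
  · refine Or.inl (circleMeasure_eq_zero_of_preimage
      (hper.measure_preimage_eq_zero_of_inter_Ioo (u := arg a) Real.two_pi_pos ?_))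
    refine measure_mono_null ?_ h
    rintro θ ⟨⟨-, -, hφθ⟩, hθ⟩
    exact ⟨by simp [hφθ], hθ⟩

/-- Let `a ∈ 𝕋`, let `Ω ⊆ ℂ` be an open set containing the closed unit disc
with the point `a` removed, and let `φ` be analytic on `Ω` with
`φ(𝔻) ⊆ 𝔻`. Then the set `K_φ = {z ∈ 𝕋 ∖ {a} : |φ(z)| = 1}` has normalized
arc-length measure `0` or `1`. (Lemma 3.3 of the paper.) -/
theorem measure_eq_one_inner_or_zero
    (a : ℂ) (ha : ‖a‖ = 1)
    (Ω : Set ℂ) (hΩ : IsOpen Ω)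
    (hΩsub : Metric.closedBall (0 : ℂ) 1 \ {a} ⊆ Ω)
    (φ : ℂ → ℂ) (hφ : DifferentiableOn ℂ φ Ω)
    (hmap : Set.MapsTo φ (Metric.ball (0 : ℂ) 1) (Metric.ball (0 : ℂ) 1)) :
    circleMeasure {z : ℂ | ‖z‖ = 1 ∧ z ≠ a ∧ ‖φ z‖ = 1} = 0 ∨
    circleMeasure {z : ℂ | ‖z‖ = 1 ∧ z ≠ a ∧ ‖φ z‖ = 1} = 1 :=
  measure_eq_one_inner_or_zero_general a Ω hΩ hΩsub φ hφ
end

section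
/- Let γ ∈ ℝ, let n ≥ 2 be a natural number, let μ be a nonzero real number, let g be analytic on an open neighborhood of γ, and define r(z) = μ/(z − γ)ⁿ + g(z) on a punctured neighborhood of γ. Then r does not map the intersection of the upper half-plane with any punctured neighborhood of γ into the upper half-plane: for every ε > 0 there exists z with Im z > 0 and |z − γ| < ε such that Im r(z) < 0. -/
/-!
Since `n ≥ 2`, the angles `π/(2n)` and `3π/(2n)` both lie in `(0, π)`, and at one of them
`μ sin(nθ) = |μ|`. Along the ray `z = γ + t e^{iθ}` in the upper half-plane the pole term then has
imaginary part `-|μ|/tⁿ → -∞` as `t → 0⁺`, while `Im g(z)` stays bounded by continuity of `g`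
at `γ`.
-/

open Real Set Filter Topology

lemma exists_mem_Ioo_mul_sin_nat_mul_eq_abs {n : ℕ} (hn : 2 ≤ n) (μ : ℝ) :
    ∃ θ ∈ Ioo 0 π, μ * sin (n * θ) = |μ| := by
  have hn' : (2 : ℝ) ≤ n := by exact_mod_cast hn
  rcases le_or_gt 0 μ with hμ | hμ
  · refine ⟨π / (2 * n), ⟨by positivity, ?_⟩, ?_⟩
    · rw [div_lt_iff₀ (by positivity)]
      nlinarith [pi_pos]
    · rw [show (n : ℝ) * (π / (2 * n)) = π / 2 by field_simp, sin_pi_div_two, abs_of_nonneg hμ,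
        mul_one]
  · refine ⟨3 * π / (2 * n), ⟨by positivity, ?_⟩, ?_⟩
    · rw [div_lt_iff₀ (by positivity)]
      nlinarith [pi_pos]
    · rw [show (n : ℝ) * (3 * π / (2 * n)) = π / 2 + π by field_simp; ring, sin_add_pi,
        sin_pi_div_two, abs_of_neg hμ, mul_neg_one]

lemma Complex.im_ofReal_div_ofReal_mul_exp_pow (μ t θ : ℝ) (n : ℕ) :
    ((μ : ℂ) / (t * exp (θ * I)) ^ n).im = -(μ * Real.sin (n * θ)) / t ^ n := by
  have hpow : ((t : ℂ) * exp (θ * I)) ^ n = ((t ^ n : ℝ) : ℂ) * exp ((n * θ : ℝ) * I) := by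
    rw [mul_pow, ← exp_nat_mul]
    push_cast
    ring_nf
  rw [hpow, div_mul_eq_div_div, ← ofReal_div, div_eq_mul_inv _ (exp _), ← exp_neg,
    show -((n * θ : ℝ) * I) = ((-(n * θ) : ℝ) : ℂ) * I by push_cast; ring,
    im_ofReal_mul, exp_ofReal_mul_I_im, Real.sin_neg]
  ring

lemma tendsto_neg_div_pow_nhdsGT_zero {a : ℝ} (ha : 0 < a) {n : ℕ} (hn : n ≠ 0) :
    Tendsto (fun t : ℝ => -a / t ^ n) (𝓝[>] 0) atBot := by
  have h : Tendsto (fun t : ℝ => a * t⁻¹ ^ n) (𝓝[>] 0) atTop :=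
    ((tendsto_pow_atTop hn).comp tendsto_inv_nhdsGT_zero).const_mul_atTop ha
  refine (tendsto_neg_atTop_atBot.comp h).congr fun t => ?_
  simp [div_eq_mul_inv, inv_pow]

/-- A function with a repeated real pole cannot map the upper half-plane near
the pole into the upper half-plane: if `r(z) = μ/(z-γ)ⁿ + g(z)` with `γ ∈ ℝ`,
`n ≥ 2`, `μ ∈ ℝ`, `μ ≠ 0`, and `g` analytic on an open neighborhood of `γ`,
then arbitrarily close to `γ` there are points `z` of the upper half-plane with
`Im r(z) < 0`. -/
theorem repeated_real_pole_not_halfplane_selfmap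
    (γ : ℝ) (n : ℕ) (hn : 2 ≤ n) (μ : ℝ) (hμ : μ ≠ 0)
    (g : ℂ → ℂ) (V : Set ℂ) (hV : IsOpen V) (hγV : (γ : ℂ) ∈ V)
    (hg : DifferentiableOn ℂ g V)
    (r : ℂ → ℂ) (hr : ∀ z : ℂ, z ≠ (γ : ℂ) → r z = (μ : ℂ) / (z - γ) ^ n + g z) :
    ∀ ε : ℝ, 0 < ε → ∃ z : ℂ, 0 < z.im ∧ ‖z - γ‖ < ε ∧ (r z).im < 0 := by
  intro ε hε
  obtain ⟨θ, ⟨hθ0, hθπ⟩, hθ⟩ := exists_mem_Ioo_mul_sin_nat_mul_eq_abs hn μ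
  set ray : ℝ → ℂ := fun t => γ + t * Complex.exp (θ * Complex.I)
  have hray : Tendsto ray (𝓝[>] 0) (𝓝 γ) := by
    refine tendsto_nhdsWithin_of_tendsto_nhds ?_
    simpa [ray] using ((Complex.continuous_ofReal.mul continuous_const).const_add
      (γ : ℂ)).tendsto 0
  have hgray : Tendsto (fun t => (g (ray t)).im) (𝓝[>] 0) (𝓝 (g γ).im) :=
    (Complex.continuous_im.tendsto _).comp
      ((hg.differentiableAt (hV.mem_nhds hγV)).continuousAt.tendsto.comp hray)
  have hbot : Tendsto (fun t => -|μ| / t ^ n + (g (ray t)).im) (𝓝[>] 0) atBot :=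
    (tendsto_neg_div_pow_nhdsGT_zero (abs_pos.mpr hμ) (by omega)).atBot_add hgray
  obtain ⟨t, hneg, ht, htε⟩ :=
    ((hbot.eventually_lt_atBot 0).and (Ioo_mem_nhdsGT hε : ∀ᶠ t in 𝓝[>] 0, t ∈ Ioo 0 ε)).exists
  have hsub : ray t - γ = t * Complex.exp (θ * Complex.I) := add_sub_cancel_left _ _
  refine ⟨ray t, ?_, ?_, ?_⟩
  · simpa [ray, Complex.exp_ofReal_mul_I_im] using mul_pos ht (sin_pos_of_pos_of_lt_pi hθ0 hθπ)
  · simpa [hsub, Complex.norm_exp_ofReal_mul_I, abs_of_pos ht] using htε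
  · have hne : ray t ≠ γ := fun h => by simp [h, ht.ne'] at hsub
    rwa [hr _ hne, Complex.add_im, hsub, Complex.im_ofReal_div_ofReal_mul_exp_pow, hθ]
end

section
/- Let γ ∈ ℝ, let μ > 0 be a real number, let g be analytic on an open neighborhood of γ, and define r(z) = μ/(z − γ) + g(z) on a punctured neighborhood of γ. Then r does not map the intersection of the upper half-plane with any punctured neighborhood of γ into the upper half-plane: for every ε > 0 there exists z with Im z > 0 and |z − γ| < ε such that Im r(z) < 0. Consequently, if a function analytic on ℂ⁺ mapping ℂ⁺ into ℂ⁺ has a simple pole at a real point γ with real residue μ, then μ < 0. -/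
/-!
On the vertical segment `z = γ + t i` above the real pole, `Im (μ / (z - γ)) = -μ / t`
tends to `-∞` as `t → 0⁺` when `μ > 0`, while `Im g(z)` stays bounded because `g` is
continuous at `γ`. So `Im r(z) < 0` for small `t > 0`, which is incompatible with `r`
mapping the upper half-plane near `γ` into itself.
-/

open Filter Topology Complex

lemma Complex.im_ofReal_div_ofReal_mul_I (μ t : ℝ) : ((μ : ℂ) / (t * I)).im = -(μ / t) := by
  rw [div_mul_eq_div_div, div_I, ← ofReal_div, neg_im, im_ofReal_mul, I_im, mul_one]

lemma tendsto_im_pole_add_atBot {μ : ℝ} (hμ : 0 < μ) {g : ℂ → ℂ} {x : ℂ}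
    (hg : ContinuousAt g x) :
    Tendsto (fun t : ℝ => ((μ : ℂ) / (t * I) + g (x + t * I)).im) (𝓝[>] 0) atBot := by
  have hpole : Tendsto (fun t : ℝ => ((μ : ℂ) / (t * I)).im) (𝓝[>] 0) atBot := by
    simp_rw [im_ofReal_div_ofReal_mul_I, div_eq_mul_inv]
    exact tendsto_neg_atTop_atBot.comp (tendsto_inv_nhdsGT_zero.const_mul_atTop hμ)
  have hpath : Tendsto (fun t : ℝ => x + t * I) (𝓝[>] 0) (𝓝 x) := by
    have : Continuous (fun t : ℝ => x + t * I) := by fun_prop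
    simpa using (this.tendsto 0).mono_left nhdsWithin_le_nhds
  simp_rw [add_im]
  exact hpole.atBot_add (continuous_im.continuousAt.tendsto.comp (hg.tendsto.comp hpath))

lemma exists_im_pole_add_neg {γ μ : ℝ} (hμ : 0 < μ) {g : ℂ → ℂ} (hg : ContinuousAt g γ)
    {ε : ℝ} (hε : 0 < ε) :
    ∃ z : ℂ, 0 < z.im ∧ ‖z - γ‖ < ε ∧ ((μ : ℂ) / (z - γ) + g z).im < 0 := by
  obtain ⟨t, hneg, ht⟩ :=
    (((tendsto_im_pole_add_atBot hμ hg).eventually_lt_atBot 0).and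
      (Ioo_mem_nhdsGT hε)).exists
  refine ⟨γ + t * I, by simpa using ht.1, ?_, by simpa using hneg⟩
  simpa [abs_of_pos ht.1] using ht.2

/-- A simple real pole with positive real residue is incompatible with mapping
the upper half-plane into itself: if `r(z) = μ/(z-γ) + g(z)` with `γ ∈ ℝ`,
`μ > 0` real, and `g` analytic on an open neighborhood of `γ`, then arbitrarily
close to `γ` there are points `z` of the upper half-plane with `Im r(z) < 0`.
Consequently, if a function analytic near `γ` of the form `μ'/(z-γ) + g'(z)`
(a simple pole at `γ` with real residue `μ' ≠ 0`) maps points of the upper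
half-plane near `γ` into the upper half-plane, then `μ' < 0`. -/
theorem simple_real_pole_residue_neg
    (γ : ℝ) (μ : ℝ) (hμ : 0 < μ)
    (g : ℂ → ℂ) (V : Set ℂ) (hV : IsOpen V) (hγV : (γ : ℂ) ∈ V)
    (hg : DifferentiableOn ℂ g V)
    (r : ℂ → ℂ) (hr : ∀ z : ℂ, z ≠ (γ : ℂ) → r z = (μ : ℂ) / (z - γ) + g z) :
    (∀ ε : ℝ, 0 < ε →
      ∃ z : ℂ, 0 < z.im ∧ ‖z - γ‖ < ε ∧ (r z).im < 0) ∧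
    (∀ (μ' : ℝ) (g' : ℂ → ℂ) (V' : Set ℂ), IsOpen V' → (γ : ℂ) ∈ V' →
      DifferentiableOn ℂ g' V' → μ' ≠ 0 →
      (∀ z ∈ V', 0 < z.im → 0 < ((μ' : ℂ) / (z - γ) + g' z).im) →
      μ' < 0) := by
  refine ⟨fun ε hε => ?_, fun μ' g' V' hV' hγV' hg' hμ' hmaps => ?_⟩
  · obtain ⟨z, hz, hzε, hneg⟩ :=
      exists_im_pole_add_neg hμ (hg.continuousOn.continuousAt (hV.mem_nhds hγV)) hε
    have hzγ : z ≠ γ := fun h => by simp [h] at hz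
    exact ⟨z, hz, hzε, hr z hzγ ▸ hneg⟩
  · by_contra hnonneg
    have hμ'pos : 0 < μ' := lt_of_le_of_ne (not_lt.mp hnonneg) hμ'.symm
    obtain ⟨ε, hε, hball⟩ := Metric.isOpen_iff.mp hV' _ hγV'
    obtain ⟨z, hz, hzε, hneg⟩ := exists_im_pole_add_neg hμ'pos
      (hg'.continuousOn.continuousAt (hV'.mem_nhds hγV')) hε
    have hzV' : z ∈ V' := hball (by rwa [Metric.mem_ball, dist_eq])
    exact (hmaps z hzV' hz).not_gt hneg
end

section
/- Let r be a rational function such that r maps the upper half-plane ℂ⁺ = {z : Im z > 0} into itself, r maps ℝ minus its finitely many poles into ℝ, and lim_{|z| → ∞} r(z)/z = 1. Then there exist α ∈ ℝ, distinct real numbers γ₁, …, γₙ, and negative real numbers μ₁, …, μₙ such that r(z) = z + α + Σᵢ₌₁ⁿ μᵢ/(z − γᵢ). -/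
/-!
Write `r = p / q` in lowest terms with `q` monic. Since `r` is real on the real axis, `p` and `q`
have real coefficients, so the zeros of `q` come in conjugate pairs; as `r` has no poles in the
upper half-plane, all of them are real. Near a real zero `γ` of multiplicity `k` we have
`r(z) ≈ c / (z - γ)^k` with `c` real and nonzero, and `Im r > 0` on the half-disc at `γ` forces
`Im (c / w^k) ≥ 0` for every `w` in the upper half-plane; testing `w^k = i` and (for `k ≥ 2`)
`w^k = -i` gives `k = 1` and `c < 0`. Hence `r(z) = h(z) + ∑ μᵢ / (z - γᵢ)` with `μᵢ < 0` by
Lagrange interpolation of `p mod q`, and `r(z) / z → 1` forces the polynomial part to be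
`h(z) = z + α` with `α` real.
-/

open Filter Polynomial Complex Bornology Asymptotics Topology
open scoped ComplexConjugate Real

namespace Lagrange

variable {F ι : Type*} [Field F] [DecidableEq ι] {s : Finset ι} {v : ι → F}

theorem eval_div_nodal_eq (hvs : Set.InjOn v s) (p : F[X]) {x : F} (hx : ∀ i ∈ s, x ≠ v i) :
    p.eval x / (nodal s v).eval x =
      (p /ₘ nodal s v).eval x + ∑ i ∈ s, nodalWeight s v i * p.eval (v i) / (x - v i) := by
  have hrem : p %ₘ nodal s v = interpolate s v fun i => p.eval (v i) := by
    refine eq_interpolate_of_eval_eq _ hvs ?_ fun i hi => ?_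
    · rw [← degree_nodal (v := v)]
      exact degree_modByMonic_lt p nodal_monic
    · rw [modByMonic_eq_sub_mul_div p (nodal s v), eval_sub, eval_mul, eval_nodal_at_node hi,
        zero_mul, sub_zero]
  have hnx := eval_nodal_not_at_node hx
  conv_lhs => rw [← modByMonic_add_div p (nodal s v), hrem]
  rw [eval_add, eval_mul, add_div, eval_interpolate_not_at_node _ hx,
    mul_div_cancel_left₀ _ hnx, mul_div_cancel_left₀ _ hnx, add_comm]
  congr 1
  refine Finset.sum_congr rfl fun i _ => ?_
  ring

end Lagrange

namespace Polynomial

theorem eval_ne_zero_of_isCoprime_of_isRoot {R : Type*} [CommRing R] [Nontrivial R]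
    {p q : R[X]} (hpq : IsCoprime p q) {w : R} (hw : q.IsRoot w) : p.eval w ≠ 0 := by
  simpa [hw.eq_zero] using aeval_ne_zero_of_isCoprime hpq w

variable {𝕜 : Type*} [NontriviallyNormedField 𝕜]

theorem eq_C_of_tendsto_eval_div_cobounded {D : 𝕜[X]}
    (h : Tendsto (fun z => D.eval z / z) (cobounded 𝕜) (𝓝 0)) : D = C (D.coeff 0) := by
  refine eq_C_of_degree_le_zero (not_lt.mp fun hD => ?_)
  have hX : (X : 𝕜[X]).eval =O[cobounded 𝕜] D.eval :=
    isBigO_cobounded_of_degree_le (by rwa [degree_X, Nat.WithBot.one_le_iff_zero_lt])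
  have hD : D.eval =o[cobounded 𝕜] (X : 𝕜[X]).eval := by
    refine (isLittleO_iff_tendsto' ?_).mpr (by simpa using h)
    filter_upwards [eventually_ne_cobounded 0] with z hz h0
    exact absurd (by simpa using h0) hz
  exact isLittleO_irrefl (by simpa using (eventually_ne_cobounded 0).frequently)
    (hX.trans_isLittleO hD)

theorem divByMonic_eq_X_add_C_of_tendsto {p q : 𝕜[X]} (hq : q.Monic)
    (h : Tendsto (fun z => p.eval z / q.eval z / z) (cobounded 𝕜) (𝓝 1)) :
    p /ₘ q = X + C ((p /ₘ q - X).coeff 0) := by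
  have hrem : Tendsto (fun z => (p %ₘ q).eval z / q.eval z / z) (cobounded 𝕜) (𝓝 0) := by
    simpa [div_eq_mul_inv] using
      (isLittleO_cobounded_of_degree_lt (degree_modByMonic_lt p hq)).tendsto_div_nhds_zero.mul
        tendsto_inv₀_cobounded
  have hquo : Tendsto (fun z => (p /ₘ q - X).eval z / z) (cobounded 𝕜) (𝓝 0) := by
    have hdiff := (h.sub hrem).sub_const 1
    rw [sub_zero, sub_self] at hdiff
    refine hdiff.congr' ?_
    filter_upwards [eventually_ne_cobounded 0,
      le_cofinite _ (eventually_cofinite_not_isRoot hq.ne_zero)] with z hz (hqz : q.eval z ≠ 0)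
    have hdecomp := congrArg (eval z) (modByMonic_add_div p q)
    rw [eval_add, eval_mul] at hdecomp
    rw [← hdecomp, eval_sub, eval_X]
    field_simp
    ring
  rw [← eq_C_of_tendsto_eval_div_cobounded hquo, add_sub_cancel]

theorem eval_conj_of_map_conj_eq {p : ℂ[X]} (hp : p.map (starRingEnd ℂ) = p) (z : ℂ) :
    p.eval (conj z) = conj (p.eval z) := by
  conv_lhs => rw [← hp]
  rw [eval_map, eval₂_hom]

theorem mul_map_conj_eq_of_im_eval_div_eq_zero {p q : ℂ[X]} (hq : q ≠ 0)
    (h : ∀ x : ℝ, q.eval (x : ℂ) ≠ 0 → (p.eval (x : ℂ) / q.eval (x : ℂ)).im = 0) :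
    p * q.map (starRingEnd ℂ) = p.map (starRingEnd ℂ) * q := by
  refine eq_of_infinite_eval_eq _ _ ?_
  have hS : {x : ℝ | q.eval (x : ℂ) ≠ 0}.Infinite :=
    ((finite_setOfPred_isRoot hq).preimage ofReal_injective.injOn).infinite_compl
  refine (hS.image ofReal_injective.injOn).mono ?_
  rintro _ ⟨x, hx, rfl⟩
  have hreal := conj_eq_iff_im.mpr (h x hx)
  rw [map_div₀, div_eq_div_iff ((_root_.map_ne_zero _).mpr hx) hx] at hreal
  have hconj (f : ℂ[X]) : (f.map (starRingEnd ℂ)).eval (x : ℂ) = conj (f.eval (x : ℂ)) := by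
    rw [eval_map, ← eval₂_hom, conj_ofReal]
  simp only [Set.mem_ofPred_eq, eval_mul, hconj]
  linear_combination hreal.symm

theorem map_conj_eq_of_mul_map_conj_eq {p q : ℂ[X]} (hpq : IsCoprime p q) (hq : q.Monic)
    (h : p * q.map (starRingEnd ℂ) = p.map (starRingEnd ℂ) * q) :
    p.map (starRingEnd ℂ) = p ∧ q.map (starRingEnd ℂ) = q := by
  have hqq : q.map (starRingEnd ℂ) = q :=
    eq_of_monic_of_dvd_of_natDegree_le hq (hq.map _)
      (hpq.symm.dvd_of_dvd_mul_left (h ▸ dvd_mul_left q _)) (natDegree_map _).le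
  refine ⟨(mul_right_cancel₀ hq.ne_zero ?_).symm, hqq⟩
  rwa [hqq] at h

theorem map_conj_nodal_ofReal (S : Finset ℝ) :
    (Lagrange.nodal S ((↑) : ℝ → ℂ)).map (starRingEnd ℂ) =
      Lagrange.nodal S ((↑) : ℝ → ℂ) := by
  simp [Lagrange.nodal, Polynomial.map_prod]

end Polynomial

namespace Complex

theorem exists_im_pos_pow_eq_exp_mul_I {k : ℕ} {θ : ℝ} (h0 : 0 < θ) (hθ : θ < k * π) :
    ∃ w : ℂ, 0 < w.im ∧ w ^ k = exp (θ * I) := by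
  have hk : (0 : ℝ) < k := pos_of_mul_pos_left (h0.trans hθ) Real.pi_pos.le
  refine ⟨exp ((θ / k : ℝ) * I), ?_, ?_⟩
  · rw [exp_ofReal_mul_I_im]
    exact Real.sin_pos_of_pos_of_lt_pi (by positivity) ((div_lt_iff₀' hk).mpr hθ)
  · rw [← exp_nat_mul, ofReal_div, ofReal_natCast, ← mul_assoc,
      mul_div_cancel₀ _ (by exact_mod_cast hk.ne')]

theorem eq_one_and_neg_of_forall_im_div_pow_nonneg {c : ℝ} (hc : c ≠ 0) {k : ℕ} (hk : 0 < k)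
    (h : ∀ w : ℂ, 0 < w.im → 0 ≤ ((c : ℂ) / w ^ k).im) : k = 1 ∧ c < 0 := by
  have hsin : ∀ θ : ℝ, 0 < θ → θ < k * π → c * Real.sin θ ≤ 0 := by
    intro θ h0 hθ
    obtain ⟨w, hw, hwk⟩ := exists_im_pos_pow_eq_exp_mul_I h0 hθ
    have := h w hw
    rwa [hwk, div_eq_mul_inv, ← exp_neg, ← neg_mul, ← ofReal_neg, im_ofReal_mul,
      exp_ofReal_mul_I_im, Real.sin_neg, mul_neg, neg_nonneg] at this
  have hk1 : (1 : ℝ) ≤ k := by exact_mod_cast hk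
  have hneg : c < 0 := by
    have := hsin (π / 2) (by positivity) (by nlinarith [Real.pi_pos])
    rw [Real.sin_pi_div_two, mul_one] at this
    exact this.lt_of_ne hc
  refine ⟨?_, hneg⟩
  by_contra hne
  have hk2 : (2 : ℝ) ≤ k := by exact_mod_cast (show 2 ≤ k by omega)
  have := hsin (π / 2 + π) (by positivity) (by nlinarith [Real.pi_pos])
  rw [Real.sin_add_pi, Real.sin_pi_div_two] at this
  linarith

end Complex

namespace Polynomial

variable {p q : ℂ[X]} (hpos : ∀ z : ℂ, 0 < z.im → 0 < (p.eval z / q.eval z).im)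
include hpos

theorem eval_ne_zero_of_im_pos {z : ℂ} (hz : 0 < z.im) : q.eval z ≠ 0 := by
  intro h
  simpa [h] using hpos z hz

/-- The left side is the limit as `ε → 0⁺` of `ε ^ k * (p / q) (γ + ε w)`, whose imaginary part
is positive. -/
theorem im_div_pow_nonneg_of_eq_X_sub_C_pow_mul {γ : ℝ} {k : ℕ} {Q : ℂ[X]}
    (hfac : q = (X - C (γ : ℂ)) ^ k * Q) (hQ : Q.eval (γ : ℂ) ≠ 0) {w : ℂ} (hw : 0 < w.im) :
    0 ≤ (p.eval (γ : ℂ) / Q.eval (γ : ℂ) / w ^ k).im := by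
  set F : ℝ → ℂ := fun ε => p.eval (γ + ε * w) / Q.eval (γ + ε * w) / w ^ k
  have hcont : ContinuousAt (fun ε => (F ε).im) 0 := by
    refine continuous_im.continuousAt.comp ((ContinuousAt.div ?_ ?_ ?_).div_const _) <;>
      first | fun_prop | simpa using hQ
  have hF_pos : ∀ ε : ℝ, 0 < ε → 0 < (F ε).im := by
    intro ε hε
    have hz : 0 < ((γ : ℂ) + ε * w).im := by simpa using mul_pos hε hw
    have hF : F ε = ((ε ^ k : ℝ) : ℂ) * (p.eval (γ + ε * w) / q.eval (γ + ε * w)) := by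
      have : (ε : ℂ) ^ k ≠ 0 := pow_ne_zero k (ofReal_ne_zero.mpr hε.ne')
      simp only [F, hfac, eval_mul, eval_pow, eval_sub, eval_X, eval_C, add_sub_cancel_left,
        mul_pow, ofReal_pow]
      field_simp
    rw [hF, im_ofReal_mul]
    exact mul_pos (pow_pos hε k) (hpos _ hz)
  simpa [F] using ge_of_tendsto (hcont.tendsto.mono_left nhdsWithin_le_nhds)
    (eventually_nhdsWithin_of_forall (s := Set.Ioi 0) fun ε hε => (hF_pos ε hε).le)

theorem pole_simple_and_residue_neg (hp : p.map (starRingEnd ℂ) = p) {γ : ℝ} {k : ℕ} {Q : ℂ[X]}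
    (hQc : Q.map (starRingEnd ℂ) = Q) (hfac : q = (X - C (γ : ℂ)) ^ k * Q) (hk : 0 < k)
    (hQ : Q.eval (γ : ℂ) ≠ 0) (hpγ : p.eval (γ : ℂ) ≠ 0) :
    k = 1 ∧ ∃ μ : ℝ, μ < 0 ∧ p.eval (γ : ℂ) / Q.eval (γ : ℂ) = μ := by
  have hreal : conj (p.eval (γ : ℂ) / Q.eval (γ : ℂ)) = p.eval (γ : ℂ) / Q.eval (γ : ℂ) := by
    rw [map_div₀, ← eval_conj_of_map_conj_eq hp, ← eval_conj_of_map_conj_eq hQc, conj_ofReal]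
  obtain ⟨c, hc⟩ := conj_eq_iff_real.mp hreal
  have hc0 : c ≠ 0 := by
    rintro rfl
    exact div_ne_zero hpγ hQ (by simpa using hc)
  obtain ⟨rfl, hneg⟩ := Complex.eq_one_and_neg_of_forall_im_div_pow_nonneg hc0 hk fun w hw =>
    hc ▸ im_div_pow_nonneg_of_eq_X_sub_C_pow_mul hpos hfac hQ hw
  exact ⟨rfl, c, hneg, hc⟩

theorem exists_finset_eq_nodal (hp : p.map (starRingEnd ℂ) = p)
    (hq : q.map (starRingEnd ℂ) = q) (hqm : q.Monic) (hpq : IsCoprime p q) :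
    ∃ S : Finset ℝ, q = Lagrange.nodal S ((↑) : ℝ → ℂ) := by
  have hreal : ∀ w ∈ q.roots, ((w.re : ℝ) : ℂ) = w := by
    intro w hw
    have hw : q.IsRoot w := isRoot_of_mem_roots hw
    refine conj_eq_iff_re.mp (conj_eq_iff_im.mpr (le_antisymm ?_ ?_)) <;> by_contra! h
    · exact eval_ne_zero_of_im_pos hpos h hw
    · refine eval_ne_zero_of_im_pos hpos (z := conj w) (by simpa using h) ?_
      rw [eval_conj_of_map_conj_eq hq, hw.eq_zero, map_zero]
  have hsimple : ∀ w ∈ q.roots, q.rootMultiplicity w = 1 := by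
    intro w hw
    have hw' : q.IsRoot w := isRoot_of_mem_roots hw
    rw [← hreal w hw] at hw' ⊢
    refine (pole_simple_and_residue_neg hpos hp ?_
      (pow_mul_divByMonic_rootMultiplicity_eq q _).symm ((rootMultiplicity_pos hqm.ne_zero).mpr hw')
      (eval_divByMonic_pow_rootMultiplicity_ne_zero _ hqm.ne_zero)
      (eval_ne_zero_of_isCoprime_of_isRoot hpq hw')).1
    rw [map_divByMonic _ ((monic_X_sub_C _).pow _), hq]
    simp
  have hnodup : q.roots.Nodup := Multiset.nodup_iff_count_le_one.mpr fun w => by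
    by_cases hw : w ∈ q.roots
    · rw [count_roots, hsimple w hw]
    · simp [Multiset.count_eq_zero_of_notMem hw]
  refine ⟨⟨q.roots.map re, (Multiset.nodup_map_iff_inj_on hnodup).mpr ?_⟩, ?_⟩
  · intro v hv w hw h
    rw [← hreal v hv, ← hreal w hw, h]
  · rw [Lagrange.nodal, Finset.prod_eq_multiset_prod, Multiset.map_map]
    conv_lhs => rw [(IsAlgClosed.splits q).eq_prod_roots_of_monic hqm]
    congr 1
    exact Multiset.map_congr rfl fun w hw => by simp [hreal w hw]

theorem exists_finset_eval_div_eq (hp : p.map (starRingEnd ℂ) = p)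
    (hq : q.map (starRingEnd ℂ) = q) (hqm : q.Monic) (hpq : IsCoprime p q)
    (hlim : Tendsto (fun z => p.eval z / q.eval z / z) (cobounded ℂ) (𝓝 1)) :
    ∃ (α : ℝ) (S : Finset ℝ) (μ : ℝ → ℝ), (∀ x ∈ S, μ x < 0) ∧
      ∀ z : ℂ, (∀ x ∈ S, z ≠ x) →
        p.eval z / q.eval z = z + α + ∑ x ∈ S, (μ x : ℂ) / (z - x) := by
  obtain ⟨S, rfl⟩ := exists_finset_eq_nodal hpos hp hq hqm hpq
  have hres : ∀ x ∈ S, ∃ μ : ℝ, μ < 0 ∧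
      Lagrange.nodalWeight S ((↑) : ℝ → ℂ) x * p.eval (x : ℂ) = μ := by
    intro x hx
    rw [Lagrange.nodalWeight_eq_eval_nodal_erase_inv, ← div_eq_inv_mul]
    refine (pole_simple_and_residue_neg hpos hp (map_conj_nodal_ofReal _)
      (by rw [pow_one]; exact Lagrange.nodal_eq_mul_nodal_erase hx) one_pos
      (Lagrange.eval_nodal_not_at_node fun y hy => ?_)
      (eval_ne_zero_of_isCoprime_of_isRoot hpq (Lagrange.eval_nodal_at_node hx))).2
    exact_mod_cast (Finset.ne_of_mem_erase hy).symm
  choose! μ hμneg hμ using hres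
  have hquo := divByMonic_eq_X_add_C_of_tendsto Lagrange.nodal_monic hlim
  set a := (p /ₘ Lagrange.nodal S ((↑) : ℝ → ℂ) - X).coeff 0
  have ha : conj a = a := by
    have hquoc := map_divByMonic (p := p) (starRingEnd ℂ) hqm
    rw [hp, hq, hquo] at hquoc
    simpa using congrArg (coeff · 0) hquoc
  refine ⟨a.re, S, μ, hμneg, fun z hz => ?_⟩
  rw [Lagrange.eval_div_nodal_eq ofReal_injective.injOn p hz, hquo, conj_eq_iff_re.mp ha]
  simp only [eval_add, eval_X, eval_C]
  congr 1
  exact Finset.sum_congr rfl fun x hx => by rw [hμ x hx]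

end Polynomial

/-- Structure theorem for inner rational self-maps of the upper half-plane
with derivative 1 at infinity: if a rational function `r` maps
`ℂ⁺ = {Im z > 0}` into itself, maps `ℝ` minus its poles into `ℝ`, and
`r(z)/z → 1` as `|z| → ∞`, then `r(z) = z + α + ∑ μᵢ/(z-γᵢ)` for some
`α ∈ ℝ`, distinct real `γᵢ` and negative real `μᵢ`. -/
theorem rational_inner_selfmap_structure (r : RatFunc ℂ)
    (hself : ∀ z : ℂ, 0 < z.im → 0 < (r.eval (RingHom.id ℂ) z).im)
    (hinner : ∀ x : ℝ, r.denom.eval (x : ℂ) ≠ 0 →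
      (r.eval (RingHom.id ℂ) (x : ℂ)).im = 0)
    (hlim : Tendsto (fun z : ℂ => r.eval (RingHom.id ℂ) z / z)
      (Bornology.cobounded ℂ) (nhds 1)) :
    ∃ (α : ℝ) (n : ℕ) (γ μ : Fin n → ℝ),
      Function.Injective γ ∧ (∀ i, μ i < 0) ∧
      ∀ z : ℂ, (∀ i, z ≠ (γ i : ℂ)) →
        r.eval (RingHom.id ℂ) z = z + α + ∑ i, (μ i : ℂ) / (z - γ i) := by
  obtain ⟨hp, hq⟩ := map_conj_eq_of_mul_map_conj_eq r.isCoprime_num_denom r.monic_denom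
    (mul_map_conj_eq_of_im_eval_div_eq_zero r.denom_ne_zero hinner)
  obtain ⟨α, S, μ, hμ, hS⟩ :=
    exists_finset_eval_div_eq hself hp hq r.monic_denom r.isCoprime_num_denom hlim
  set γ := S.orderEmbOfFin rfl
  refine ⟨α, S.card, γ, μ ∘ γ, γ.injective, fun i => hμ _ (S.orderEmbOfFin_mem rfl i),
    fun z hz => ?_⟩
  have hzS : ∀ x ∈ S, z ≠ x := by
    intro x hx
    obtain ⟨i, rfl⟩ : x ∈ Set.range γ := by rwa [S.range_orderEmbOfFin]
    exact hz i
  change r.num.eval z / r.denom.eval z = _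
  rw [hS z hzS]
  conv_lhs => rw [← S.map_orderEmbOfFin_univ rfl, Finset.sum_map]
  rfl
end
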